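/- arXiv:2507.17909 — 4 statements merged into one kernel-verified Lean document; each statement's English description precedes it below -/
import Mathlib

section
/- Let {y_n} and {z_n} be sequences of nonnegative reals, and let c, b, ε, δ be positive constants with b ≥ 1 such that y_{n+1} ≤ c·b^n·(y_n^{1+δ} + z_n^{1+ε}·y_n^δ) and z_{n+1} ≤ c·b^n·(y_n + z_n^{1+ε}) for all n. Define l = min(δ, ε/(1+ε)) and ω = min((2c)^{-1/δ} b^{-1/(δl)}, (2c)^{-(1+ε)/ε} b^{-1/(εl)}). If y_0 ≤ ω and z_0 ≤ ω^{1/(1+ε)}, then y_n ≤ ω·b^{-n/b} and z_n ≤ (ω·b^{-n/b})^{1/(1+ε)} for every n ≥ 0. -/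
open Real

set_option maxHeartbeats 1000000 in
theorem stmt0 (y z : ℕ → ℝ) (c b ε δ l ω : ℝ)
    (hc : 0 < c) (hb : 1 ≤ b) (hε : 0 < ε) (hδ : 0 < δ)
    (hy : ∀ n, 0 ≤ y n) (hz : ∀ n, 0 ≤ z n)
    (hrec1 : ∀ n : ℕ, y (n+1) ≤ c * b ^ (n:ℝ) * (y n ^ (1+δ) + z n ^ (1+ε) * y n ^ δ))
    (hrec2 : ∀ n : ℕ, z (n+1) ≤ c * b ^ (n:ℝ) * (y n + z n ^ (1+ε)))
    (hl : l = min δ (ε / (1+ε)))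
    (hω : ω = min ((2*c) ^ (-(1/δ)) * b ^ (-(1/(δ*l))))
               ((2*c) ^ (-((1+ε)/ε)) * b ^ (-(1/(ε*l)))))
    (hy0 : y 0 ≤ ω) (hz0 : z 0 ≤ ω ^ (1/(1+ε))) :
    ∀ n : ℕ, y n ≤ ω * b ^ (-(n:ℝ)/b) ∧ z n ≤ (ω * b ^ (-(n:ℝ)/b)) ^ (1/(1+ε)) := by
  have hb0 : (0:ℝ) < b := by linarith
  have h1ε : (0:ℝ) < 1 + ε := by linarith
  have h2c : (0:ℝ) < 2 * c := by linarith
  have hl0 : 0 < l := by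
    rw [hl]; exact lt_min hδ (div_pos hε h1ε)
  have hlδ : l ≤ δ := hl ▸ min_le_left _ _
  have hlε : l ≤ ε / (1+ε) := hl ▸ min_le_right _ _
  have hl1 : l < 1 := lt_of_le_of_lt hlε (by rw [div_lt_one h1ε]; linarith)
  have hω_pos : 0 < ω := by
    rw [hω]; exact lt_min (by positivity) (by positivity)
  -- key inequality 1 : 2c ω^δ ≤ b^(-1/l)
  have key1 : 2 * c * ω ^ δ ≤ b ^ (-(1/l)) := by
    have hω1 : ω ≤ (2*c) ^ (-(1/δ)) * b ^ (-(1/(δ*l))) := hω ▸ min_le_left _ _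
    have h1 : ω ^ δ ≤ ((2*c) ^ (-(1/δ)) * b ^ (-(1/(δ*l)))) ^ δ :=
      Real.rpow_le_rpow hω_pos.le hω1 hδ.le
    have h2 : ((2*c) ^ (-(1/δ)) * b ^ (-(1/(δ*l)))) ^ δ = (2*c)⁻¹ * b ^ (-(1/l)) := by
      rw [Real.mul_rpow (by positivity) (by positivity), ← Real.rpow_mul h2c.le,
        ← Real.rpow_mul hb0.le]
      congr 1
      · rw [show -(1/δ) * δ = -1 by field_simp, Real.rpow_neg_one]
      · congr 1
        field_simp
    calc 2 * c * ω ^ δ ≤ 2 * c * ((2*c)⁻¹ * b ^ (-(1/l))) :=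
          mul_le_mul_of_nonneg_left (h1.trans_eq h2) h2c.le
      _ = b ^ (-(1/l)) := by field_simp
  -- key inequality 2 : 2c ω^(ε/(1+ε)) ≤ b^(-1/(l(1+ε)))
  have key2 : 2 * c * ω ^ (ε/(1+ε)) ≤ b ^ (-(1/(l*(1+ε)))) := by
    have hω2 : ω ≤ (2*c) ^ (-((1+ε)/ε)) * b ^ (-(1/(ε*l))) := hω ▸ min_le_right _ _
    have h1 : ω ^ (ε/(1+ε)) ≤ ((2*c) ^ (-((1+ε)/ε)) * b ^ (-(1/(ε*l)))) ^ (ε/(1+ε)) :=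
      Real.rpow_le_rpow hω_pos.le hω2 (by positivity)
    have h2 : ((2*c) ^ (-((1+ε)/ε)) * b ^ (-(1/(ε*l)))) ^ (ε/(1+ε))
        = (2*c)⁻¹ * b ^ (-(1/(l*(1+ε)))) := by
      rw [Real.mul_rpow (by positivity) (by positivity), ← Real.rpow_mul h2c.le,
        ← Real.rpow_mul hb0.le]
      congr 1
      · rw [show -((1+ε)/ε) * (ε/(1+ε)) = -1 by field_simp, Real.rpow_neg_one]
      · congr 1
        field_simp
    calc 2 * c * ω ^ (ε/(1+ε)) ≤ 2 * c * ((2*c)⁻¹ * b ^ (-(1/(l*(1+ε))))) :=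
          mul_le_mul_of_nonneg_left (h1.trans_eq h2) h2c.le
      _ = b ^ (-(1/(l*(1+ε)))) := by field_simp
  have hωsplit : ω ^ (1/(1+ε)) * ω ^ (ε/(1+ε)) = ω := by
    rw [← Real.rpow_add hω_pos, show 1/(1+ε) + ε/(1+ε) = 1 from by field_simp, Real.rpow_one]
  -- main induction with the stronger exponent -n/l
  have main : ∀ n : ℕ, y n ≤ ω * b ^ (-(n:ℝ)/l) ∧ z n ≤ (ω * b ^ (-(n:ℝ)/l)) ^ (1/(1+ε)) := by
    intro n
    induction n with
    | zero =>
      constructor <;>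
        simp only [Nat.cast_zero, neg_zero, zero_div, Real.rpow_zero, mul_one]
      · exact hy0
      · exact hz0
    | succ n ih =>
      have hn : (0:ℝ) ≤ (n:ℝ) := Nat.cast_nonneg n
      set A : ℝ := ω * b ^ (-(n:ℝ)/l) with hA
      have hA0 : 0 < A := by positivity
      have hyA : y n ≤ A := ih.1
      have hzA : z n ≤ A ^ (1/(1+ε)) := ih.2
      have hbn : 0 < b ^ (n:ℝ) := Real.rpow_pos_of_pos hb0 _
      have hz1 : z n ^ (1+ε) ≤ A := by
        calc z n ^ (1+ε) ≤ (A ^ (1/(1+ε))) ^ (1+ε) :=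
              Real.rpow_le_rpow (hz n) hzA (by positivity)
          _ = A := by
              rw [← Real.rpow_mul hA0.le, one_div, inv_mul_cancel₀ h1ε.ne', Real.rpow_one]
      constructor
      · -- y bound
        push_cast
        have hy1 : y n ^ (1+δ) ≤ A ^ (1+δ) := Real.rpow_le_rpow (hy n) hyA (by positivity)
        have hy2 : y n ^ δ ≤ A ^ δ := Real.rpow_le_rpow (hy n) hyA hδ.le
        have hAA : A * A ^ δ = A ^ (1+δ) := by
          rw [Real.rpow_add hA0, Real.rpow_one]
        have step_y : y (n+1) ≤ 2 * c * b ^ (n:ℝ) * A ^ (1+δ) := by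
          have hsum : y n ^ (1+δ) + z n ^ (1+ε) * y n ^ δ ≤ A ^ (1+δ) + A ^ (1+δ) := by
            have h3 : z n ^ (1+ε) * y n ^ δ ≤ A * A ^ δ :=
              mul_le_mul hz1 hy2 (Real.rpow_nonneg (hy n) _) hA0.le
            rw [hAA] at h3
            linarith
          calc y (n+1) ≤ c * b ^ (n:ℝ) * (y n ^ (1+δ) + z n ^ (1+ε) * y n ^ δ) := hrec1 n
            _ ≤ c * b ^ (n:ℝ) * (A ^ (1+δ) + A ^ (1+δ)) :=
                mul_le_mul_of_nonneg_left hsum (by positivity)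
            _ = 2 * c * b ^ (n:ℝ) * A ^ (1+δ) := by ring
        have eq1 : 2 * c * b ^ (n:ℝ) * A ^ (1+δ)
            = (2 * c * ω ^ δ) * (ω * b ^ ((n:ℝ) + (-(n:ℝ)/l) * (1+δ))) := by
          rw [hA, Real.mul_rpow hω_pos.le (Real.rpow_pos_of_pos hb0 _).le,
            ← Real.rpow_mul hb0.le, Real.rpow_add hω_pos, Real.rpow_add hb0, Real.rpow_one]
          ring
        have hexp : -(1/l) + ((n:ℝ) + (-(n:ℝ)/l) * (1+δ)) ≤ -((n:ℝ)+1)/l := by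
          have eL : -(1/l) + ((n:ℝ) + (-(n:ℝ)/l) * (1+δ))
              = (-1 + (n:ℝ)*l - (n:ℝ)*(1+δ)) / l := by
            field_simp
            ring
          have h4 : (n:ℝ) * l ≤ (n:ℝ) * δ := mul_le_mul_of_nonneg_left hlδ hn
          have hnum : -1 + (n:ℝ)*l - (n:ℝ)*(1+δ) ≤ -((n:ℝ)+1) := by linarith
          rw [eL]
          gcongr
        calc y (n+1) ≤ 2 * c * b ^ (n:ℝ) * A ^ (1+δ) := step_y
          _ = (2 * c * ω ^ δ) * (ω * b ^ ((n:ℝ) + (-(n:ℝ)/l) * (1+δ))) := eq1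
          _ ≤ b ^ (-(1/l)) * (ω * b ^ ((n:ℝ) + (-(n:ℝ)/l) * (1+δ))) :=
              mul_le_mul_of_nonneg_right key1 (by positivity)
          _ = ω * b ^ (-(1/l) + ((n:ℝ) + (-(n:ℝ)/l) * (1+δ))) := by
              rw [Real.rpow_add hb0 (-(1/l)) ((n:ℝ) + (-(n:ℝ)/l) * (1+δ)),
                Real.rpow_add hb0 (n:ℝ) ((-(n:ℝ)/l) * (1+δ))]
              ring
          _ ≤ ω * b ^ (-((n:ℝ)+1)/l) :=
              mul_le_mul_of_nonneg_left (Real.rpow_le_rpow_of_exponent_le hb hexp) hω_pos.le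
      · -- z bound
        push_cast
        have step_z : z (n+1) ≤ 2 * c * b ^ (n:ℝ) * A := by
          calc z (n+1) ≤ c * b ^ (n:ℝ) * (y n + z n ^ (1+ε)) := hrec2 n
            _ ≤ c * b ^ (n:ℝ) * (A + A) :=
                mul_le_mul_of_nonneg_left (add_le_add hyA hz1) (by positivity)
            _ = 2 * c * b ^ (n:ℝ) * A := by ring
        have eq2 : 2 * c * b ^ (n:ℝ) * A
            = (2 * c * ω ^ (ε/(1+ε))) * (ω ^ (1/(1+ε)) * b ^ ((n:ℝ) + -(n:ℝ)/l)) := by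
          conv_lhs => rw [hA, ← hωsplit]
          rw [Real.rpow_add hb0]
          ring
        have eqT : (ω * b ^ (-((n:ℝ)+1)/l)) ^ (1/(1+ε))
            = ω ^ (1/(1+ε)) * b ^ ((-((n:ℝ)+1)/l) * (1/(1+ε))) := by
          rw [Real.mul_rpow hω_pos.le (Real.rpow_pos_of_pos hb0 _).le, ← Real.rpow_mul hb0.le]
        have hexp2 : -(1/(l*(1+ε))) + ((n:ℝ) + -(n:ℝ)/l) ≤ (-((n:ℝ)+1)/l) * (1/(1+ε)) := by
          have eL : -(1/(l*(1+ε))) + ((n:ℝ) + -(n:ℝ)/l)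
              = (-1 + (n:ℝ)*l*(1+ε) - (n:ℝ)*(1+ε)) / (l*(1+ε)) := by
            field_simp
            ring
          have eR : (-((n:ℝ)+1)/l) * (1/(1+ε)) = (-((n:ℝ)+1)) / (l*(1+ε)) := by
            rw [div_mul_div_comm, mul_one]
          have hle : l * (1+ε) ≤ ε := (le_div_iff₀ h1ε).mp hlε
          have h4 : (n:ℝ) * (l * (1+ε)) ≤ (n:ℝ) * ε := mul_le_mul_of_nonneg_left hle hn
          have hnum : -1 + (n:ℝ)*l*(1+ε) - (n:ℝ)*(1+ε) ≤ -((n:ℝ)+1) := by linarith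
          rw [eL, eR]
          gcongr
        calc z (n+1) ≤ 2 * c * b ^ (n:ℝ) * A := step_z
          _ = (2 * c * ω ^ (ε/(1+ε))) * (ω ^ (1/(1+ε)) * b ^ ((n:ℝ) + -(n:ℝ)/l)) := eq2
          _ ≤ b ^ (-(1/(l*(1+ε)))) * (ω ^ (1/(1+ε)) * b ^ ((n:ℝ) + -(n:ℝ)/l)) :=
              mul_le_mul_of_nonneg_right key2 (by positivity)
          _ = ω ^ (1/(1+ε)) * b ^ (-(1/(l*(1+ε))) + ((n:ℝ) + -(n:ℝ)/l)) := by
              rw [Real.rpow_add hb0 (-(1/(l*(1+ε)))) ((n:ℝ) + -(n:ℝ)/l),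
                Real.rpow_add hb0 (n:ℝ) (-(n:ℝ)/l)]
              ring
          _ ≤ ω ^ (1/(1+ε)) * b ^ ((-((n:ℝ)+1)/l) * (1/(1+ε))) :=
              mul_le_mul_of_nonneg_left
                (Real.rpow_le_rpow_of_exponent_le hb hexp2) (by positivity)
          _ = (ω * b ^ (-((n:ℝ)+1)/l)) ^ (1/(1+ε)) := eqT.symm
  intro n
  obtain ⟨h1, h2⟩ := main n
  have hee : -(n:ℝ)/l ≤ -(n:ℝ)/b := by
    rw [div_le_div_iff₀ hl0 hb0]
    have hn : (0:ℝ) ≤ (n:ℝ) := Nat.cast_nonneg n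
    nlinarith [hl1.le.trans hb]
  have hmono : ω * b ^ (-(n:ℝ)/l) ≤ ω * b ^ (-(n:ℝ)/b) :=
    mul_le_mul_of_nonneg_left (Real.rpow_le_rpow_of_exponent_le hb hee) hω_pos.le
  exact ⟨h1.trans hmono, h2.trans (Real.rpow_le_rpow (by positivity) hmono (by positivity))⟩
end

section
/- Let φ(t) be a nonnegative, non-increasing function on the closed interval [k₀, M], and assume there exist constants c, τ, δ > 0 such that (h−k)^τ · φ(h)^δ ≤ c·(M−k)^τ·(φ(k) − φ(h)) for all M > h > k ≥ k₀. Then φ(h) → 0 as h → M. -/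
/-!
Being non-increasing and nonnegative, `φ` has a limit `L = inf φ ≥ 0` as `h → M⁻`. Since
`φ h ≥ L`, letting `h → M⁻` in the estimate gives `(M - k)^τ L^δ ≤ c (M - k)^τ (φ k - L)`,
i.e. `L^δ ≤ c (φ k - L)` for every `k`. Now let `k → M⁻`: the right side tends to `0`,
so `L^δ ≤ 0` and hence `L = 0`.
-/

open Set Filter Topology Real

theorem rpow_le_mul_sub_of_forall_le {φ : ℝ → ℝ} {k M c τ δ L : ℝ} (hkM : k < M)
    (hc : 0 ≤ c) (hδ : 0 ≤ δ) (hL : 0 ≤ L) (hLφ : ∀ h ∈ Ioo k M, L ≤ φ h)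
    (hest : ∀ h ∈ Ioo k M, (h - k) ^ τ * φ h ^ δ ≤ c * (M - k) ^ τ * (φ k - φ h)) :
    L ^ δ ≤ c * (φ k - L) := by
  have hMk : 0 < M - k := sub_pos.2 hkM
  have hbound : ∀ h ∈ Ioo k M, (h - k) ^ τ * L ^ δ ≤ (M - k) ^ τ * (c * (φ k - L)) := by
    intro h hh
    have hhk : 0 ≤ (h - k) ^ τ := rpow_nonneg (sub_pos.2 hh.1).le τ
    calc (h - k) ^ τ * L ^ δ ≤ (h - k) ^ τ * φ h ^ δ := by gcongr; exact hLφ h hh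
      _ ≤ c * (M - k) ^ τ * (φ k - φ h) := hest h hh
      _ ≤ (M - k) ^ τ * (c * (φ k - L)) := by
        rw [mul_comm c, mul_assoc]
        gcongr
        exact hLφ h hh
  have hlim : Tendsto (fun h => (h - k) ^ τ * L ^ δ) (𝓝[<] M) (𝓝 ((M - k) ^ τ * L ^ δ)) :=
    (((continuousAt_id.sub continuousAt_const).rpow_const (Or.inl hMk.ne')).mul
      continuousAt_const).continuousWithinAt.tendsto
  have hMlim : (M - k) ^ τ * L ^ δ ≤ (M - k) ^ τ * (c * (φ k - L)) :=
    le_of_tendsto hlim (eventually_of_mem (Ioo_mem_nhdsLT hkM) hbound)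
  exact le_of_mul_le_mul_left hMlim (rpow_pos_of_pos hMk τ)

theorem eq_zero_of_tendsto_of_rpow_le_mul_sub {ι : Type*} {l : Filter ι} [l.NeBot]
    {f : ι → ℝ} {L c δ : ℝ} (hL : 0 ≤ L) (hf : Tendsto f l (𝓝 L))
    (h : ∀ᶠ i in l, L ^ δ ≤ c * (f i - L)) : L = 0 := by
  have hlim : Tendsto (fun i => c * (f i - L)) l (𝓝 0) := by
    simpa using (hf.sub_const L).const_mul c
  have hLδ : L ^ δ ≤ 0 := ge_of_tendsto hlim h
  by_contra hne
  exact hLδ.not_gt (rpow_pos_of_pos (hL.lt_of_ne' hne) δ)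

theorem stmt2_general (k₀ M c τ δ : ℝ) (φ : ℝ → ℝ)
    (hM : k₀ < M) (hc : 0 < c) (hδ : 0 < δ)
    (hnonneg : ∀ t ∈ Set.Icc k₀ M, 0 ≤ φ t)
    (hanti : AntitoneOn φ (Set.Icc k₀ M))
    (hest : ∀ h k, k₀ ≤ k → k < h → h < M →
      (h - k) ^ τ * φ h ^ δ ≤ c * (M - k) ^ τ * (φ k - φ h)) :
    Filter.Tendsto φ (nhdsWithin M (Set.Ico k₀ M)) (nhds 0) := by
  have hsub : Ioo k₀ M ⊆ Icc k₀ M := Ioo_subset_Icc_self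
  set L := sInf (φ '' Ioo k₀ M)
  have hφ_nonneg : ∀ y ∈ φ '' Ioo k₀ M, 0 ≤ y :=
    forall_mem_image.2 fun t ht => hnonneg t (hsub ht)
  have hbdd : BddBelow (φ '' Ioo k₀ M) := ⟨0, hφ_nonneg⟩
  have hL : 0 ≤ L := le_csInf ((nonempty_Ioo.2 hM).image φ) hφ_nonneg
  have hLφ : ∀ t ∈ Ioo k₀ M, L ≤ φ t := fun t ht => csInf_le hbdd (mem_image_of_mem φ ht)
  have hφL : Tendsto φ (𝓝[<] M) (𝓝 L) :=
    (hanti.mono hsub).tendsto_nhdsWithin_Ioo_left (nonempty_Ioo.2 hM) hbdd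
  have hkey : ∀ᶠ k in 𝓝[<] M, L ^ δ ≤ c * (φ k - L) := by
    filter_upwards [Ioo_mem_nhdsLT hM] with k hk
    exact rpow_le_mul_sub_of_forall_le hk.2 hc.le hδ.le hL
      (fun h hh => hLφ h ⟨hk.1.trans hh.1, hh.2⟩) (fun h hh => hest h k hk.1.le hh.1 hh.2)
  rw [nhdsWithin_Ico_eq_nhdsLT hM, ← eq_zero_of_tendsto_of_rpow_le_mul_sub hL hφL hkey]
  exact hφL

theorem stmt2 (k₀ M c τ δ : ℝ) (φ : ℝ → ℝ)
    (hk₀ : 0 ≤ k₀) (hM : k₀ < M) (hc : 0 < c) (hτ : 0 < τ) (hδ : 0 < δ)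
    (hnonneg : ∀ t ∈ Set.Icc k₀ M, 0 ≤ φ t)
    (hanti : AntitoneOn φ (Set.Icc k₀ M))
    (hest : ∀ h k, k₀ ≤ k → k < h → h < M →
      (h - k) ^ τ * φ h ^ δ ≤ c * (M - k) ^ τ * (φ k - φ h)) :
    Filter.Tendsto φ (nhdsWithin M (Set.Ico k₀ M)) (nhds 0) :=
  stmt2_general k₀ M c τ δ φ hM hc hδ hnonneg hanti hest
end

section
/- The polynomial equation 2√2·τ⁵ + 2τ⁴ + 2τ² + √2·τ − 2 = 0 has a unique real solution τ* in the interval (1/2, 1), and this solution satisfies 0.59346 < τ* < 0.59347. -/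
noncomputable def f4 : ℝ → ℝ := fun τ =>
  2*Real.sqrt 2*τ^5 + 2*τ^4 + 2*τ^2 + Real.sqrt 2*τ - 2

lemma s2_pos : (0:ℝ) < Real.sqrt 2 := Real.sqrt_pos.mpr (by norm_num)

lemma s2_lb : (1.4142135:ℝ) < Real.sqrt 2 := by
  have h := Real.sq_sqrt (by norm_num : (2:ℝ) ≥ 0)
  nlinarith [s2_pos]

lemma s2_ub : Real.sqrt 2 < (1.4142136:ℝ) := by
  have h := Real.sq_sqrt (by norm_num : (2:ℝ) ≥ 0)
  nlinarith [s2_pos]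

lemma f4_mono : ∀ a b : ℝ, 0 < a → a < b → f4 a < f4 b := by
  intro a b ha hab
  unfold f4
  have hs := s2_pos
  have h5 : a^5 < b^5 := by gcongr <;> linarith
  have h4 : a^4 < b^4 := by gcongr <;> linarith
  have h2 : a^2 < b^2 := by gcongr <;> linarith
  nlinarith

lemma f4_cont : Continuous f4 := by unfold f4; continuity

lemma f4_neg : f4 0.59346 < 0 := by
  unfold f4; nlinarith [s2_ub, s2_lb]

lemma f4_pos : 0 < f4 0.59347 := by
  unfold f4; nlinarith [s2_ub, s2_lb]

theorem stmt4 :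
    (∃! τ : ℝ, τ ∈ Set.Ioo (1/2 : ℝ) 1 ∧
      2*Real.sqrt 2*τ^5 + 2*τ^4 + 2*τ^2 + Real.sqrt 2*τ - 2 = 0) ∧
    ∀ τ : ℝ, τ ∈ Set.Ioo (1/2 : ℝ) 1 →
      2*Real.sqrt 2*τ^5 + 2*τ^4 + 2*τ^2 + Real.sqrt 2*τ - 2 = 0 →
      0.59346 < τ ∧ τ < 0.59347 := by
  have key : ∀ τ : ℝ, τ ∈ Set.Ioo (1/2 : ℝ) 1 →
      2*Real.sqrt 2*τ^5 + 2*τ^4 + 2*τ^2 + Real.sqrt 2*τ - 2 = 0 →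
      0.59346 < τ ∧ τ < 0.59347 := by
    intro τ hτ h0
    have hf : f4 τ = 0 := h0
    constructor
    · rcases lt_trichotomy τ 0.59346 with h | h | h
      · exfalso
        have := f4_mono τ 0.59346 (by linarith [hτ.1]) h
        have := f4_neg; linarith
      · exfalso; subst h; have := f4_neg; linarith
      · exact h
    · rcases lt_trichotomy τ 0.59347 with h | h | h
      · exact h
      · exfalso; subst h; have := f4_pos; linarith
      · exfalso
        have := f4_mono 0.59347 τ (by norm_num) h
        have := f4_pos; linarith
  refine ⟨?_, key⟩
  have hsub : Set.Icc (0.59346:ℝ) 0.59347 ⊆ Set.Ioo (1/2 : ℝ) 1 := by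
    intro x hx; exact ⟨by linarith [hx.1], by linarith [hx.2]⟩
  obtain ⟨c, hc, hfc⟩ : ∃ c ∈ Set.Icc (0.59346:ℝ) 0.59347, f4 c = 0 := by
    have := intermediate_value_Icc (by norm_num : (0.59346:ℝ) ≤ 0.59347)
      (f4_cont.continuousOn)
    have h0 : (0:ℝ) ∈ Set.Icc (f4 0.59346) (f4 0.59347) :=
      ⟨le_of_lt f4_neg, le_of_lt f4_pos⟩
    obtain ⟨c, hc, hfc⟩ := this h0
    exact ⟨c, hc, hfc⟩
  refine ⟨c, ⟨hsub hc, hfc⟩, ?_⟩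
  rintro y ⟨hy, hfy⟩
  by_contra hne
  rcases lt_or_gt_of_ne hne with h | h
  · have := f4_mono y c (by linarith [hy.1]) h
    have : f4 c = 0 := hfc
    have : f4 y = 0 := hfy
    have := f4_mono y c (by linarith [hy.1]) h
    simp_all
  · have := f4_mono c y (by linarith [hsub hc |>.1]) h
    have : f4 c = 0 := hfc
    have : f4 y = 0 := hfy
    simp_all
end

section
/- Let K ⊆ ℝ^N be the attractor of an iterated function system of M ≥ 2 similarities all with common ratio r ∈ (0,1) satisfying the open set condition, and let d = log M / log(1/r). For n ≥ 1 and 1 ≤ k ≤ M^n define q_k = min over all unions U of k distinct n-cells of (diam U)^d / (k·r^{nd}), and a_n = min_{1 ≤ k ≤ M^n} q_k. Then {a_n} is a decreasing sequence. -/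
open Set

section aux

variable {α : Type*} {M : ℕ} (G : Fin M → α → α)

private def FdAux (l : List (Fin M)) : α → α :=
  l.foldr (fun i f => G i ∘ f) id

private lemma FdAux_append (l₁ l₂ : List (Fin M)) :
    FdAux G (l₁ ++ l₂) = FdAux G l₁ ∘ FdAux G l₂ := by
  induction l₁ with
  | nil => rfl
  | cons i l ih =>
    show G i ∘ FdAux G (l ++ l₂) = (G i ∘ FdAux G l) ∘ FdAux G l₂
    rw [ih]
    rfl

private lemma union_words (K : Set α) (hKinv : K = ⋃ i, G i '' K) :
    ∀ k : ℕ, (⋃ τ : Fin k → Fin M, FdAux G (List.ofFn τ) '' K) = K := by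
  intro k
  induction k with
  | zero =>
    simp [FdAux]
    exact Set.iUnion_const K
  | succ k ih =>
    have hsurj : Function.Surjective
        (fun p : Fin M × (Fin k → Fin M) => (Fin.cons p.1 p.2 : Fin (k+1) → Fin M)) :=
      fun τ => ⟨(τ 0, Fin.tail τ), Fin.cons_self_tail τ⟩
    rw [← hsurj.iUnion_comp, Set.iUnion_prod']
    have hc : ∀ (i : Fin M) (τ : Fin k → Fin M),
        FdAux G (List.ofFn (Fin.cons i τ)) = G i ∘ FdAux G (List.ofFn τ) := by
      intro i τ
      rw [List.ofFn_succ]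
      simp [FdAux]
    calc (⋃ i, ⋃ τ : Fin k → Fin M, FdAux G (List.ofFn (Fin.cons i τ)) '' K)
        = ⋃ i, G i '' (⋃ τ : Fin k → Fin M, FdAux G (List.ofFn τ) '' K) := by
          simp only [hc, Set.image_comp, Set.image_iUnion]
      _ = K := by rw [ih, ← hKinv]

private def myApp {M m n : ℕ} (h : m ≤ n) (ω : Fin m → Fin M) (τ : Fin (n - m) → Fin M) :
    Fin n → Fin M :=
  fun j => if hj : (j : ℕ) < m then ω ⟨j, hj⟩
    else τ ⟨(j : ℕ) - m, by have := j.isLt; omega⟩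

private lemma myApp_inj {M m n : ℕ} (h : m ≤ n) :
    Function.Injective
      (fun p : (Fin m → Fin M) × (Fin (n - m) → Fin M) => myApp h p.1 p.2) := by
  rintro ⟨ω, τ⟩ ⟨ω', τ'⟩ heq
  simp only [Prod.mk.injEq]
  constructor
  · funext i
    have := congrFun heq ⟨i, lt_of_lt_of_le i.isLt h⟩
    simpa [myApp, i.isLt] using this
  · funext i
    have hi : m + (i : ℕ) < n := by have := i.isLt; omega
    have h2 := congrFun heq ⟨m + i, hi⟩
    have hnot : ¬ (m + (i : ℕ) < m) := by omega
    simp only [myApp, hnot, dif_neg, not_false_iff] at h2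
    simpa [Nat.add_sub_cancel_left] using h2

private lemma myApp_ofFn {M m n : ℕ} (h : m ≤ n) (ω : Fin m → Fin M)
    (τ : Fin (n - m) → Fin M) :
    List.ofFn (myApp h ω τ) = List.ofFn ω ++ List.ofFn τ := by
  apply List.ext_getElem
  · simp; omega
  · intro i h1 h2
    simp only [List.length_ofFn] at h1
    by_cases hi : i < m
    · simp [List.getElem_ofFn, List.getElem_append, hi, myApp]
    · simp [List.getElem_ofFn, List.getElem_append, hi, myApp]

end aux

theorem stmt18 (N M : ℕ) (hM : 2 ≤ M) (r : ℝ) (hr : r ∈ Set.Ioo (0:ℝ) 1)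
    (G : Fin M → EuclideanSpace ℝ (Fin N) → EuclideanSpace ℝ (Fin N))
    (hsim : ∀ i x y, dist (G i x) (G i y) = r * dist x y)
    (U : Set (EuclideanSpace ℝ (Fin N))) (hUopen : IsOpen U) (hUne : U.Nonempty)
    (hUsub : ∀ i, G i '' U ⊆ U)
    (hUdisj : Pairwise fun i j => Disjoint (G i '' U) (G j '' U))
    (K : Set (EuclideanSpace ℝ (Fin N))) (hKcpt : IsCompact K) (hKne : K.Nonempty)
    (hKinv : K = ⋃ i, G i '' K)
    (d : ℝ) (hd : d = Real.log M / Real.log (1/r))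
    (cell : (n : ℕ) → (Fin n → Fin M) → Set (EuclideanSpace ℝ (Fin N)))
    (hcell : ∀ (n : ℕ) (ω : Fin n → Fin M),
      cell n ω = ((List.ofFn ω).foldr (fun i f => G i ∘ f) id) '' K)
    (a : ℕ → ℝ)
    (ha : ∀ n : ℕ, a n = sInf { q : ℝ | ∃ s : Finset (Fin n → Fin M), s.Nonempty ∧
      q = (Metric.diam (⋃ ω ∈ s, cell n ω)) ^ d / (s.card * r ^ ((n:ℝ) * d)) }) :
    ∀ m n : ℕ, 1 ≤ m → m ≤ n → a n ≤ a m := by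
  intro m n hm hmn
  haveI : Nonempty (Fin M) := ⟨⟨0, by omega⟩⟩
  have hM0 : (0:ℝ) < M := by positivity
  obtain ⟨hr0, hr1⟩ := hr
  -- r ^ d = 1/M
  have hrd : r ^ d = (M:ℝ)⁻¹ := by
    have hlr : Real.log r ≠ 0 := ne_of_lt (Real.log_neg hr0 hr1)
    have hlog : Real.log (1/r) = - Real.log r := by rw [one_div, Real.log_inv]
    rw [hd, Real.rpow_def_of_pos hr0, hlog]
    have hval : Real.log r * (Real.log ↑M / -Real.log r) = - Real.log M := by
      rw [div_neg, mul_neg, neg_inj, mul_comm, div_mul_cancel₀ _ hlr]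
    rw [hval, Real.exp_neg, Real.exp_log hM0]
  have hkey : ((M:ℝ))^(n-m) * r ^ ((n:ℝ)*d) = r ^ ((m:ℝ)*d) := by
    have h1 : (n:ℝ)*d = (m:ℝ)*d + ((n-m : ℕ):ℝ)*d := by
      rw [Nat.cast_sub hmn]; ring
    have h2 : r ^ ((((n-m:ℕ)):ℝ) * d) = ((M:ℝ)⁻¹)^(n-m) := by
      rw [mul_comm, Real.rpow_mul hr0.le, hrd, Real.rpow_natCast]
    have h3 : ((M:ℝ))^(n-m) * ((M:ℝ)⁻¹)^(n-m) = 1 := by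
      rw [← mul_pow, mul_inv_cancel₀ hM0.ne', one_pow]
    rw [h1, Real.rpow_add hr0, h2]
    calc ((M:ℝ))^(n-m) * (r ^ ((m:ℝ)*d) * ((M:ℝ)⁻¹)^(n-m))
        = (((M:ℝ))^(n-m) * ((M:ℝ)⁻¹)^(n-m)) * r ^ ((m:ℝ)*d) := by ring
      _ = r ^ ((m:ℝ)*d) := by rw [h3, one_mul]
  rw [ha m, ha n]
  apply csInf_le_csInf
  · -- BddBelow by 0
    refine ⟨0, ?_⟩
    rintro q ⟨s, hs, rfl⟩
    apply div_nonneg (Real.rpow_nonneg Metric.diam_nonneg d)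
    exact mul_nonneg (Nat.cast_nonneg _) (Real.rpow_pos_of_pos hr0 _).le
  · -- Nonempty
    obtain ⟨i0⟩ := ‹Nonempty (Fin M)›
    exact ⟨_, ⟨{fun _ => i0}, Finset.singleton_nonempty _, rfl⟩⟩
  · -- subset
    rintro q ⟨s, hs, rfl⟩
    set s' : Finset (Fin n → Fin M) :=
      Finset.image (fun p => myApp hmn p.1 p.2) (s ×ˢ Finset.univ) with hs'def
    have hcelldec : ∀ ω : Fin m → Fin M,
        (⋃ τ : Fin (n-m) → Fin M, cell n (myApp hmn ω τ)) = cell m ω := by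
      intro ω
      have : ∀ τ : Fin (n-m) → Fin M,
          cell n (myApp hmn ω τ) = FdAux G (List.ofFn ω) '' (FdAux G (List.ofFn τ) '' K) := by
        intro τ
        rw [hcell, myApp_ofFn]
        show FdAux G (List.ofFn ω ++ List.ofFn τ) '' K = _
        rw [FdAux_append, Set.image_comp]
      simp only [this, ← Set.image_iUnion]
      rw [union_words G K hKinv, hcell]
      rfl
    have h1 : (⋃ ω' ∈ s', cell n ω') = ⋃ ω ∈ s, cell m ω := by
      ext x
      simp only [Set.mem_iUnion, exists_prop, hs'def, Finset.mem_image,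
        Finset.mem_product, Finset.mem_univ, and_true]
      constructor
      · rintro ⟨ω', ⟨⟨ω, τ⟩, hωs, rfl⟩, hx⟩
        refine ⟨ω, hωs, ?_⟩
        rw [← hcelldec ω]
        exact Set.mem_iUnion.2 ⟨τ, hx⟩
      · rintro ⟨ω, hωs, hx⟩
        rw [← hcelldec ω] at hx
        obtain ⟨τ, hτ⟩ := Set.mem_iUnion.1 hx
        exact ⟨myApp hmn ω τ, ⟨⟨ω, τ⟩, hωs, rfl⟩, hτ⟩
    have hcard : s'.card = s.card * M^(n-m) := by
      rw [hs'def, Finset.card_image_of_injective _ (myApp_inj hmn),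
        Finset.card_product, Finset.card_univ]
      simp [Fintype.card_fun]
    have hden : (s'.card : ℝ) * r ^ ((n:ℝ)*d) = (s.card : ℝ) * r ^ ((m:ℝ)*d) := by
      rw [hcard]
      push_cast
      rw [mul_assoc, hkey]
    refine ⟨s', ?_, ?_⟩
    · exact (hs.product ⟨_, Finset.mem_univ (fun _ => Classical.arbitrary (Fin M))⟩).image _
    · rw [h1, hden]
end
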